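/- Let r > 0 and n ≥ 1. Let Z be a compact (r,n)-stacked space over X_1,…,X_n with pieces Z_1,…,Z_n, and W a compact (r,n)-stacked space over Y_1,…,Y_n with pieces W_1,…,W_n, where all X_k and Y_k are nonempty compact metric spaces of diameter at most r. Let R be a correspondence between Z and W with distortion dis(R) < 2r. Then for every k ∈ {1,…,n} one has R[Z_k] ⊆ W_k and R⁻¹[W_k] ⊆ Z_k; consequently R_k = R ∩ (Z_k × W_k) is a correspondence between Z_k and W_k with dis(R_k) ≤ dis(R), and hence dis(R) ≥ 2·d_GH(X_k, Y_k) for every k. -/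

import Mathlib

/-!
Distances in an `(r,n)`-stacked space are quantised: points of one piece are at most `r` apart,
every other point is at least `5r` away from them, the poles are `3r` apart, and the `k`-th piece
is at distance `5r(k+1)` from both poles. A correspondence of distortion `< 2r` perturbs distances
by less than `2r`, so it matches poles with poles (partners of the two poles are at a distance in
`(r, 5r)`), and then, comparing distances to a pole, the `k`-th piece with the `k`-th piece. The
restricted correspondence glues the two pieces into one space in which they are
`dis R / 2`-Hausdorff close.
-/

open GromovHausdorff

universe u v w

/-- `Z` (with two distinguished points `p true = p¹` and `p false = p⁻¹`, and pieces
`P 0, …, P (n-1)`, where `P k` plays the role of `Z_{k+1}`) is an `(r,n)`-stacked space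
over the nonempty compact metric spaces `X 0, …, X (n-1)` (each of diameter at most `r`):
* `dist p¹ p⁻¹ = 3r`;
* the pieces are pairwise disjoint and do not contain `p¹`, `p⁻¹`;
* `{p¹, p⁻¹}` together with the pieces cover `Z`;
* the piece `P k` with the induced metric is isometric to `X k`;
* `dist (p^s) z = 5r(k+1)` for every `z ∈ P k` and both `s`;
* `dist z w = 5r|k - l|` for `z ∈ P k`, `w ∈ P l` with `k ≠ l`. -/
def IsStackedSpace (r : ℝ) {n : ℕ} (X : Fin n → Type u) [∀ k, MetricSpace (X k)]
    (Z : Type v) [MetricSpace Z] (p : Bool → Z) (P : Fin n → Set Z) : Prop :=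
  dist (p true) (p false) = 3 * r ∧
  (Pairwise fun k l : Fin n => Disjoint (P k) (P l)) ∧
  (∀ (k : Fin n) (s : Bool), p s ∉ P k) ∧
  ({p true, p false} ∪ ⋃ k, P k) = Set.univ ∧
  (∀ k : Fin n, Nonempty (X k ≃ᵢ (P k : Set Z))) ∧
  (∀ (k : Fin n) (s : Bool), ∀ z ∈ P k, dist (p s) z = 5 * r * ((k : ℕ) + 1)) ∧
  (∀ k l : Fin n, k ≠ l → ∀ z ∈ P k, ∀ w ∈ P l,
    dist z w = 5 * r * |((k : ℕ) : ℝ) - ((l : ℕ) : ℝ)|)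

/-- `R ⊆ Z × W` is a correspondence: both projections are surjective onto `Z` and `W`. -/
def IsCorrespondence {Z : Type v} {W : Type w} (R : Set (Z × W)) : Prop :=
  (∀ z : Z, ∃ w : W, (z, w) ∈ R) ∧ (∀ w : W, ∃ z : Z, (z, w) ∈ R)

/-- The distortion of a relation `R ⊆ Z × W`:
`dis R = sup {|d_Z(x, ξ) - d_W(y, η)| : (x, y), (ξ, η) ∈ R}`. -/
noncomputable def distortion {Z : Type v} {W : Type w} [MetricSpace Z] [MetricSpace W]
    (R : Set (Z × W)) : ℝ :=
  sSup {t : ℝ | ∃ a ∈ R, ∃ b ∈ R, t = |dist a.1 b.1 - dist a.2 b.2|}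

theorem IsCorrespondence.restrict {Z W : Type*} {R : Set (Z × W)} (hR : IsCorrespondence R)
    {s : Set Z} {t : Set W} (hst : {w | ∃ z ∈ s, (z, w) ∈ R} ⊆ t)
    (hts : {z | ∃ w ∈ t, (z, w) ∈ R} ⊆ s) :
    IsCorrespondence {a : s × t | ((a.1 : Z), (a.2 : W)) ∈ R} := by
  constructor
  · intro z
    obtain ⟨w, hw⟩ := hR.1 z
    exact ⟨⟨w, hst ⟨z, z.2, hw⟩⟩, hw⟩
  · intro w
    obtain ⟨z, hz⟩ := hR.2 w
    exact ⟨⟨z, hts ⟨w, w.2, hz⟩⟩, hz⟩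

section Distortion

variable {Z W : Type*} [MetricSpace Z] [MetricSpace W]

theorem distortion_nonneg (R : Set (Z × W)) : 0 ≤ distortion R :=
  Real.sSup_nonneg fun _ ⟨_, _, _, _, ht⟩ => ht ▸ abs_nonneg _

theorem abs_dist_sub_dist_le_distortion [BoundedSpace Z] [BoundedSpace W] {R : Set (Z × W)}
    {a b : Z × W} (ha : a ∈ R) (hb : b ∈ R) :
    |dist a.1 b.1 - dist a.2 b.2| ≤ distortion R := by
  refine le_csSup ⟨Metric.diam (Set.univ : Set Z) + Metric.diam (Set.univ : Set W), ?_⟩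
    ⟨a, ha, b, hb, rfl⟩
  rintro _ ⟨x, -, y, -, rfl⟩
  have hZ := Metric.dist_le_diam_of_mem (Bornology.IsBounded.all _)
    (Set.mem_univ x.1) (Set.mem_univ y.1)
  have hW := Metric.dist_le_diam_of_mem (Bornology.IsBounded.all _)
    (Set.mem_univ x.2) (Set.mem_univ y.2)
  rw [abs_sub_le_iff]
  constructor <;> linarith [dist_nonneg (x := x.1) (y := y.1), dist_nonneg (x := x.2) (y := y.2)]

theorem distortion_le {R : Set (Z × W)} {D : ℝ} (hD : 0 ≤ D)
    (h : ∀ a ∈ R, ∀ b ∈ R, |dist a.1 b.1 - dist a.2 b.2| ≤ D) : distortion R ≤ D :=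
  Real.sSup_le (fun _ ⟨a, ha, b, hb, ht⟩ => ht ▸ h a ha b hb) hD

theorem distortion_restrict_le [BoundedSpace Z] [BoundedSpace W] (R : Set (Z × W))
    (s : Set Z) (t : Set W) :
    distortion {a : s × t | ((a.1 : Z), (a.2 : W)) ∈ R} ≤ distortion R :=
  distortion_le (distortion_nonneg R) fun a ha b hb =>
    abs_dist_sub_dist_le_distortion (a := ((a.1 : Z), (a.2 : W))) (b := ((b.1 : Z), (b.2 : W)))
      ha hb

end Distortion

section GromovHausdorff

variable {A B : Type*} [MetricSpace A] [CompactSpace A] [Nonempty A]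
  [MetricSpace B] [CompactSpace B] [Nonempty B]

theorem ghDist_congr {A' B' : Type*} [MetricSpace A'] [CompactSpace A'] [Nonempty A']
    [MetricSpace B'] [CompactSpace B'] [Nonempty B'] (e : A ≃ᵢ A') (f : B ≃ᵢ B') :
    ghDist A B = ghDist A' B' := by
  rw [ghDist, ghDist, toGHSpace_eq_toGHSpace_iff_isometryEquiv.2 ⟨e⟩,
    toGHSpace_eq_toGHSpace_iff_isometryEquiv.2 ⟨f⟩]

theorem ghDist_le_of_correspondence {S : Set (A × B)} (hS : IsCorrespondence S) {ε : ℝ}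
    (hε : 0 < ε) (h : ∀ a ∈ S, ∀ b ∈ S, |dist a.1 b.1 - dist a.2 b.2| ≤ 2 * ε) :
    ghDist A B ≤ ε := by
  have : Nonempty S := by
    obtain ⟨b, hb⟩ := hS.1 (Classical.arbitrary A)
    exact ⟨⟨_, hb⟩⟩
  let : MetricSpace (A ⊕ B) := Metric.glueMetricApprox (fun x : S => x.1.1)
    (fun x : S => x.1.2) ε hε fun x y => h _ x.2 _ y.2
  have hglued : ∀ a b, (a, b) ∈ S → dist (Sum.inl a : A ⊕ B) (Sum.inr b) = ε :=
    fun a b hab =>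
      Metric.glueDist_glued_points (fun x : S => x.1.1) (fun x : S => x.1.2) ε ⟨(a, b), hab⟩
  refine (ghDist_le_hausdorffDist (Φ := (Sum.inl : A → A ⊕ B)) (Ψ := Sum.inr)
    (Isometry.of_dist_eq fun _ _ => rfl) (Isometry.of_dist_eq fun _ _ => rfl)).trans
    (Metric.hausdorffDist_le_of_mem_dist hε.le ?_ ?_)
  · rintro _ ⟨a, rfl⟩
    obtain ⟨b, hab⟩ := hS.1 a
    exact ⟨Sum.inr b, Set.mem_range_self b, (hglued a b hab).le⟩
  · rintro _ ⟨b, rfl⟩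
    obtain ⟨a, hab⟩ := hS.2 b
    exact ⟨Sum.inl a, Set.mem_range_self a, (dist_comm _ _).trans_le (hglued a b hab).le⟩

theorem two_mul_ghDist_le_distortion {S : Set (A × B)} (hS : IsCorrespondence S) :
    2 * ghDist A B ≤ distortion S := by
  suffices ghDist A B ≤ distortion S / 2 by linarith
  refine le_of_forall_pos_le_add fun δ hδ => ghDist_le_of_correspondence hS
    (by linarith [distortion_nonneg S]) fun a ha b hb => ?_
  linarith [abs_dist_sub_dist_le_distortion ha hb]

end GromovHausdorff

theorem one_le_abs_natCast_sub_natCast {k l : ℕ} (h : k ≠ l) : 1 ≤ |(k : ℝ) - l| := by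
  have : (1 : ℤ) ≤ |(k : ℤ) - l| := Int.one_le_abs (sub_ne_zero.2 (by exact_mod_cast h))
  exact_mod_cast this

namespace IsStackedSpace

variable {r : ℝ} {n : ℕ} {X : Fin n → Type*} [∀ k, MetricSpace (X k)]
  {Z : Type*} [MetricSpace Z] {p : Bool → Z} {P : Fin n → Set Z}

theorem nonempty_isometryEquiv (hZ : IsStackedSpace r X Z p P) (k : Fin n) :
    Nonempty (X k ≃ᵢ P k) :=
  hZ.2.2.2.2.1 k

theorem eq_pole_or_mem (hZ : IsStackedSpace r X Z p P) (z : Z) :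
    (∃ s, z = p s) ∨ ∃ k, z ∈ P k := by
  have hz : z ∈ ({p true, p false} ∪ ⋃ k, P k) := hZ.2.2.2.1 ▸ Set.mem_univ z
  simp only [Set.mem_union, Set.mem_insert_iff, Set.mem_singleton_iff, Set.mem_iUnion] at hz
  rcases hz with (h | h) | h
  exacts [Or.inl ⟨true, h⟩, Or.inl ⟨false, h⟩, Or.inr h]

theorem dist_pole_pole_not (hZ : IsStackedSpace r X Z p P) (s : Bool) :
    dist (p s) (p !s) = 3 * r := by
  cases s
  · exact (dist_comm _ _).trans hZ.1
  · exact hZ.1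

theorem dist_pole_pole_le (hZ : IsStackedSpace r X Z p P) (hr : 0 ≤ r) (s s' : Bool) :
    dist (p s) (p s') ≤ 3 * r := by
  rcases Bool.eq_or_eq_not s s' with rfl | rfl
  · rw [dist_self]; positivity
  · rw [dist_comm, ← Bool.not_not s', hZ.dist_pole_pole_not]

theorem dist_pole (hZ : IsStackedSpace r X Z p P) (s : Bool) {k : Fin n} {z : Z} (hz : z ∈ P k) :
    dist (p s) z = 5 * r * ((k : ℕ) + 1) :=
  hZ.2.2.2.2.2.1 k s z hz

theorem dist_le_of_mem [∀ k, BoundedSpace (X k)] (hZ : IsStackedSpace r X Z p P)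
    (hd : ∀ k, Metric.diam (Set.univ : Set (X k)) ≤ r) {k : Fin n} {z z' : Z} (hz : z ∈ P k)
    (hz' : z' ∈ P k) : dist z z' ≤ r := by
  obtain ⟨e⟩ := hZ.nonempty_isometryEquiv k
  calc dist z z' = dist (⟨z, hz⟩ : P k) ⟨z', hz'⟩ := rfl
    _ = dist (e.symm ⟨z, hz⟩) (e.symm ⟨z', hz'⟩) := (e.symm.dist_eq _ _).symm
    _ ≤ r := (Metric.dist_le_diam_of_mem (Bornology.IsBounded.all _)
      (Set.mem_univ _) (Set.mem_univ _)).trans (hd k)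

theorem dist_le_or_le_dist [∀ k, BoundedSpace (X k)] (hZ : IsStackedSpace r X Z p P)
    (hr : 0 ≤ r) (hd : ∀ k, Metric.diam (Set.univ : Set (X k)) ≤ r) {k : Fin n} {z : Z}
    (hz : z ∈ P k) (z' : Z) : dist z z' ≤ r ∨ 5 * r ≤ dist z z' := by
  rcases hZ.eq_pole_or_mem z' with ⟨s, rfl⟩ | ⟨l, hl⟩
  · right
    rw [dist_comm, hZ.dist_pole s hz]
    nlinarith [(k : ℕ).cast_nonneg (α := ℝ)]
  · by_cases hkl : k = l
    · subst hkl
      exact Or.inl (hZ.dist_le_of_mem hd hz hl)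
    · right
      rw [hZ.2.2.2.2.2.2 k l hkl z hz z' hl]
      nlinarith [one_le_abs_natCast_sub_natCast (Fin.val_injective.ne hkl)]

theorem mem_of_abs_dist_pole_sub_lt (hZ : IsStackedSpace r X Z p P) (hr : 0 ≤ r) {s : Bool}
    {k : Fin n} {z : Z} (h : |dist (p s) z - 5 * r * ((k : ℕ) + 1)| < 2 * r) : z ∈ P k := by
  rcases hZ.eq_pole_or_mem z with ⟨s', rfl⟩ | ⟨l, hl⟩
  · rw [abs_sub_lt_iff] at h
    nlinarith [hZ.dist_pole_pole_le hr s s', (k : ℕ).cast_nonneg (α := ℝ)]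
  · by_cases hlk : l = k
    · exact hlk ▸ hl
    · rw [hZ.dist_pole s hl, ← mul_sub, add_sub_add_right_eq_sub, abs_mul,
        abs_of_nonneg (by positivity : 0 ≤ 5 * r)] at h
      nlinarith [one_le_abs_natCast_sub_natCast (Fin.val_injective.ne hlk)]

variable {Y : Fin n → Type*} [∀ k, MetricSpace (Y k)] [∀ k, BoundedSpace (Y k)]
  {W : Type*} [MetricSpace W] {q : Bool → W} {Q : Fin n → Set W}

theorem image_subset_of_abs_dist_sub_dist_lt (hZ : IsStackedSpace r X Z p P)
    (hW : IsStackedSpace r Y W q Q) (hr : 0 ≤ r)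
    (hdY : ∀ k, Metric.diam (Set.univ : Set (Y k)) ≤ r) {R : Set (Z × W)}
    (hRp : ∀ s, ∃ w, (p s, w) ∈ R)
    (hR : ∀ a ∈ R, ∀ b ∈ R, |dist a.1 b.1 - dist a.2 b.2| < 2 * r) (k : Fin n) :
    {w | ∃ z ∈ P k, (z, w) ∈ R} ⊆ Q k := by
  have pole_to_pole : ∀ s w, (p s, w) ∈ R → ∃ s', w = q s' := by
    intro s w hw
    obtain ⟨w', hw'⟩ := hRp !s
    have h := hR _ hw _ hw'
    rw [hZ.dist_pole_pole_not, abs_sub_lt_iff] at h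
    rcases hW.eq_pole_or_mem w with hpole | ⟨l, hl⟩
    · exact hpole
    · rcases hW.dist_le_or_le_dist hr hdY hl w' with h' | h' <;> linarith
  rintro w ⟨z, hz, hzw⟩
  obtain ⟨w₀, hw₀⟩ := hRp true
  obtain ⟨s, rfl⟩ := pole_to_pole true w₀ hw₀
  have h := hR _ hw₀ _ hzw
  rw [hZ.dist_pole true hz, abs_sub_comm] at h
  exact hW.mem_of_abs_dist_pole_sub_lt hr h

end IsStackedSpace

theorem stackedSpace_corr_pieces_general (r : ℝ) (hr : 0 < r) (n : ℕ)
    (X Y : Fin n → Type u)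
    [∀ k, MetricSpace (X k)] [∀ k, CompactSpace (X k)] [∀ k, Nonempty (X k)]
    [∀ k, MetricSpace (Y k)] [∀ k, CompactSpace (Y k)] [∀ k, Nonempty (Y k)]
    (hdX : ∀ k, Metric.diam (Set.univ : Set (X k)) ≤ r)
    (hdY : ∀ k, Metric.diam (Set.univ : Set (Y k)) ≤ r)
    (Z : Type v) [MetricSpace Z] [CompactSpace Z]
    (W : Type w) [MetricSpace W] [CompactSpace W]
    (p : Bool → Z) (P : Fin n → Set Z) (hZ : IsStackedSpace r X Z p P)
    (q : Bool → W) (Q : Fin n → Set W) (hW : IsStackedSpace r Y W q Q)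
    (R : Set (Z × W)) (hR : IsCorrespondence R) (hdis : distortion R < 2 * r) :
    ∀ k : Fin n,
      {w : W | ∃ z ∈ P k, (z, w) ∈ R} ⊆ Q k ∧
      {z : Z | ∃ w ∈ Q k, (z, w) ∈ R} ⊆ P k ∧
      IsCorrespondence {a : ↥(P k) × ↥(Q k) | ((a.1 : Z), (a.2 : W)) ∈ R} ∧
      distortion {a : ↥(P k) × ↥(Q k) | ((a.1 : Z), (a.2 : W)) ∈ R}
        ≤ distortion R ∧
      2 * ghDist (X k) (Y k) ≤ distortion R := by
  intro k
  have hRlt : ∀ a ∈ R, ∀ b ∈ R, |dist a.1 b.1 - dist a.2 b.2| < 2 * r := fun a ha b hb =>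
    (abs_dist_sub_dist_le_distortion ha hb).trans_lt hdis
  have hPQ := hZ.image_subset_of_abs_dist_sub_dist_lt hW hr.le hdY (fun s => hR.1 (p s)) hRlt k
  have hQP : {z | ∃ w ∈ Q k, (z, w) ∈ R} ⊆ P k :=
    hW.image_subset_of_abs_dist_sub_dist_lt (R := Prod.swap ⁻¹' R) hZ hr.le hdX
      (fun s => hR.2 (q s)) (fun a ha b hb => abs_sub_comm (dist a.2 b.2) _ ▸ hRlt _ ha _ hb) k
  have hRk := hR.restrict hPQ hQP
  obtain ⟨eX⟩ := hZ.nonempty_isometryEquiv k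
  obtain ⟨eY⟩ := hW.nonempty_isometryEquiv k
  have : CompactSpace (P k) := eX.toHomeomorph.compactSpace
  have : CompactSpace (Q k) := eY.toHomeomorph.compactSpace
  have : Nonempty (P k) := ⟨eX (Classical.arbitrary _)⟩
  have : Nonempty (Q k) := ⟨eY (Classical.arbitrary _)⟩
  refine ⟨hPQ, hQP, hRk, distortion_restrict_le R _ _, ?_⟩
  rw [ghDist_congr eX eY]
  exact (two_mul_ghDist_le_distortion hRk).trans (distortion_restrict_le R _ _)

/-- Let `Z`, `W` be compact `(r,n)`-stacked spaces over the `X k` and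
`Y k`, with pieces `P k` and `Q k` respectively, and let `R` be a correspondence between
`Z` and `W` with `dis R < 2r`. Then for every `k`: `R[P k] ⊆ Q k` and `R⁻¹[Q k] ⊆ P k`;
consequently `R_k = R ∩ (P k × Q k)` (viewed as a relation between the subspaces
`P k` and `Q k`) is a correspondence with `dis R_k ≤ dis R`, and hence
`dis R ≥ 2 d_GH(X k, Y k)`. -/
theorem stackedSpace_corr_pieces (r : ℝ) (hr : 0 < r) (n : ℕ) (hn : 1 ≤ n)
    (X Y : Fin n → Type u)
    [∀ k, MetricSpace (X k)] [∀ k, CompactSpace (X k)] [∀ k, Nonempty (X k)]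
    [∀ k, MetricSpace (Y k)] [∀ k, CompactSpace (Y k)] [∀ k, Nonempty (Y k)]
    (hdX : ∀ k, Metric.diam (Set.univ : Set (X k)) ≤ r)
    (hdY : ∀ k, Metric.diam (Set.univ : Set (Y k)) ≤ r)
    (Z : Type v) [MetricSpace Z] [CompactSpace Z]
    (W : Type w) [MetricSpace W] [CompactSpace W]
    (p : Bool → Z) (P : Fin n → Set Z) (hZ : IsStackedSpace r X Z p P)
    (q : Bool → W) (Q : Fin n → Set W) (hW : IsStackedSpace r Y W q Q)
    (R : Set (Z × W)) (hR : IsCorrespondence R) (hdis : distortion R < 2 * r) :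
    ∀ k : Fin n,
      {w : W | ∃ z ∈ P k, (z, w) ∈ R} ⊆ Q k ∧
      {z : Z | ∃ w ∈ Q k, (z, w) ∈ R} ⊆ P k ∧
      IsCorrespondence {a : ↥(P k) × ↥(Q k) | ((a.1 : Z), (a.2 : W)) ∈ R} ∧
      distortion {a : ↥(P k) × ↥(Q k) | ((a.1 : Z), (a.2 : W)) ∈ R}
        ≤ distortion R ∧
      2 * ghDist (X k) (Y k) ≤ distortion R :=
  stackedSpace_corr_pieces_general r hr n X Y hdX hdY Z W p P hZ q Q hW R hR hdis
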